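/- Fix a complex number z with |z| < 1, and let Φ(u,z) = (z - u)/(1 - conj(u)·z) and Δ(u,z) = (1 - conj(u)·z)/√(1 - |u|²). Then Σ_{k=0}^∞ |Φ(u,z)|^{4k}/|Δ(u,z)|⁴ tends to 0 as |u| → 1 with u ranging over the open unit disk. -/

import Mathlib

open Complex Filter

/-- The Möbius transformation of the unit disk. -/
noncomputable def Phi (u z : ℂ) : ℂ := (z - u) / (1 - (starRingEnd ℂ) u * z)

/-- The normalizing factor `Δ(u,z) = (1 - conj u * z)/√(1-|u|²)`. -/
noncomputable def Delta (u z : ℂ) : ℂ :=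
  (1 - (starRingEnd ℂ) u * z) / (Real.sqrt (1 - ‖u‖ ^ 2) : ℝ)

/-- The filter of `u` in the open unit disk with `|u| → 1`. -/
noncomputable def boundaryFilter : Filter ℂ := Filter.comap (fun u : ℂ => ‖u‖) (nhdsWithin 1 (Set.Iio 1))

/-!
With `r = |Φ(u,z)|` the series is geometric, equal to `1 / ((1 - r⁴) |Δ|⁴)`. The Möbius identity
`|1 - ū z|² - |z - u|² = (1 - |u|²)(1 - |z|²)` says exactly that `(1 - r²) |Δ|² = 1 - |z|²`, so
the sum is at most `1 / ((1 - |z|²) |Δ|²) = (1 - |u|²) / ((1 - |z|²) |1 - ū z|²)`, and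
`|1 - ū z| ≥ 1 - |z|` makes this `O(1 - |u|²)`.
-/

lemma normSq_one_sub_conj_mul_sub_normSq_sub (u z : ℂ) :
    normSq (1 - starRingEnd ℂ u * z) - normSq (z - u) = (1 - normSq u) * (1 - normSq z) := by
  simp only [normSq_apply, sub_re, sub_im, mul_re, mul_im, one_re, one_im, conj_re, conj_im]
  ring

lemma one_sub_norm_mul_norm_le_norm_one_sub_conj_mul (u z : ℂ) :
    1 - ‖u‖ * ‖z‖ ≤ ‖1 - starRingEnd ℂ u * z‖ := by
  simpa [norm_mul, norm_conj] using norm_sub_norm_le (1 : ℂ) (starRingEnd ℂ u * z)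

lemma norm_Delta_sq {u : ℂ} (hu : ‖u‖ ≤ 1) (z : ℂ) :
    ‖Delta u z‖ ^ 2 = ‖1 - starRingEnd ℂ u * z‖ ^ 2 / (1 - ‖u‖ ^ 2) := by
  have hu2 : 0 ≤ 1 - ‖u‖ ^ 2 := by nlinarith [norm_nonneg u]
  rw [Delta, norm_div, norm_real, Real.norm_of_nonneg (Real.sqrt_nonneg _), div_pow,
    Real.sq_sqrt hu2]

lemma one_sub_norm_Phi_sq_mul_norm_Delta_sq {u z : ℂ} (hu : ‖u‖ < 1) (hz : ‖z‖ ≤ 1) :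
    (1 - ‖Phi u z‖ ^ 2) * ‖Delta u z‖ ^ 2 = 1 - ‖z‖ ^ 2 := by
  have hu2 : 1 - ‖u‖ ^ 2 ≠ 0 := by nlinarith [norm_nonneg u]
  have hW : ‖1 - starRingEnd ℂ u * z‖ ≠ 0 := by
    have := one_sub_norm_mul_norm_le_norm_one_sub_conj_mul u z
    nlinarith [norm_nonneg u, norm_nonneg z]
  have key := normSq_one_sub_conj_mul_sub_normSq_sub u z
  simp only [← Complex.sq_norm] at key
  rw [norm_Delta_sq hu.le, Phi, norm_div]
  set W := ‖1 - starRingEnd ℂ u * z‖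
  field_simp
  linear_combination key

lemma tsum_pow_four_mul_div_le {r : ℝ} (hr₀ : 0 ≤ r) (hr₁ : r < 1) {c : ℝ} (hc : 0 ≤ c) :
    ∑' k : ℕ, r ^ (4 * k) / c ≤ (1 - r ^ 2)⁻¹ / c := by
  have hr4 : r ^ 4 < 1 := pow_lt_one₀ hr₀ hr₁ (by norm_num)
  have hr2 : r ^ 2 < 1 := pow_lt_one₀ hr₀ hr₁ (by norm_num)
  have hr42 : r ^ 4 ≤ r ^ 2 := pow_le_pow_of_le_one hr₀ hr₁.le (by norm_num)
  simp only [pow_mul]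
  rw [tsum_div_const, tsum_geometric_of_lt_one (by positivity) hr4]
  exact div_le_div_of_nonneg_right (inv_anti₀ (by linarith) (by linarith)) hc

lemma tsum_norm_Phi_pow_div_norm_Delta_pow_le {u z : ℂ} (hu : ‖u‖ < 1) (hz : ‖z‖ < 1) :
    ∑' k : ℕ, ‖Phi u z‖ ^ (4 * k) / ‖Delta u z‖ ^ 4
      ≤ (1 - ‖u‖ ^ 2) / ((1 - ‖z‖ ^ 2) * (1 - ‖z‖) ^ 2) := by
  have hz2 : 0 < 1 - ‖z‖ ^ 2 := by nlinarith [norm_nonneg z]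
  have hu2 : 0 < 1 - ‖u‖ ^ 2 := by nlinarith [norm_nonneg u]
  have hPhiDelta := one_sub_norm_Phi_sq_mul_norm_Delta_sq hu hz.le
  have hDelta : 0 < ‖Delta u z‖ ^ 2 := by
    by_contra! h
    nlinarith [sq_nonneg ‖Delta u z‖]
  have hPhi : ‖Phi u z‖ < 1 := by
    have : ‖Phi u z‖ ^ 2 < 1 := by nlinarith
    exact (sq_lt_one_iff₀ (norm_nonneg _)).mp this
  have hW : 1 - ‖z‖ ≤ ‖1 - starRingEnd ℂ u * z‖ := by
    nlinarith [one_sub_norm_mul_norm_le_norm_one_sub_conj_mul u z, norm_nonneg z]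
  calc ∑' k : ℕ, ‖Phi u z‖ ^ (4 * k) / ‖Delta u z‖ ^ 4
      ≤ (1 - ‖Phi u z‖ ^ 2)⁻¹ / ‖Delta u z‖ ^ 4 :=
        tsum_pow_four_mul_div_le (norm_nonneg _) hPhi (by positivity)
    _ = ((1 - ‖z‖ ^ 2) * ‖Delta u z‖ ^ 2)⁻¹ := by
        rw [← hPhiDelta]
        field_simp
    _ = (1 - ‖u‖ ^ 2) / ((1 - ‖z‖ ^ 2) * ‖1 - starRingEnd ℂ u * z‖ ^ 2) := by
        have : ‖1 - starRingEnd ℂ u * z‖ ≠ 0 := by nlinarith [norm_nonneg z]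
        rw [norm_Delta_sq hu.le]
        field_simp
    _ ≤ (1 - ‖u‖ ^ 2) / ((1 - ‖z‖ ^ 2) * (1 - ‖z‖) ^ 2) := by
        gcongr

lemma eventually_norm_lt_one_boundaryFilter : ∀ᶠ u : ℂ in boundaryFilter, ‖u‖ < 1 :=
  preimage_mem_comap self_mem_nhdsWithin

lemma tendsto_one_sub_norm_sq_boundaryFilter :
    Tendsto (fun u : ℂ => 1 - ‖u‖ ^ 2) boundaryFilter (nhds 0) := by
  have hnorm : Tendsto (fun u : ℂ => ‖u‖) boundaryFilter (nhds 1) :=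
    tendsto_comap.mono_right nhdsWithin_le_nhds
  simpa using (tendsto_const_nhds (x := (1 : ℝ))).sub (hnorm.pow 2)

/-- For fixed `z` with `|z| < 1`, the sum
`Σₖ |Φ(u,z)|^{4k}/|Δ(u,z)|⁴` tends to `0` as `|u| → 1` with `u` in the open unit disk. -/
theorem fourth_power_series_tendsto_zero (z : ℂ) (hz : ‖z‖ < 1) :
    Tendsto (fun u : ℂ =>
        ∑' k : ℕ, ‖Phi u z‖ ^ (4 * k) / ‖Delta u z‖ ^ 4)
      boundaryFilter (nhds 0) := by
  apply squeeze_zero' (Eventually.of_forall fun u => tsum_nonneg fun k => by positivity)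
    (eventually_norm_lt_one_boundaryFilter.mono fun u hu =>
      tsum_norm_Phi_pow_div_norm_Delta_pow_le hu hz)
  simpa using tendsto_one_sub_norm_sq_boundaryFilter.div_const
    ((1 - ‖z‖ ^ 2) * (1 - ‖z‖) ^ 2)
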